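/- For every connected graph G on n ≥ 4 vertices, π(G) + ∂ₙ(G) ≤ 0, where ∂ₙ is the smallest eigenvalue of the distance matrix, with equality if and only if G is the complete graph K_n. -/

import Mathlib

open SimpleGraph Finset

/-- The transmission of a vertex: the sum of distances from `v` to all other vertices. -/
noncomputable def transmission {n : ℕ} (G : SimpleGraph (Fin n)) (v : Fin n) : ℕ :=
  ∑ u, G.dist v u

/-- The proximity: the minimum average distance from a vertex to all others. -/
noncomputable def proximity {n : ℕ} (G : SimpleGraph (Fin n)) : ℝ :=
  sInf {x : ℝ | ∃ v : Fin n, x = transmission G v} / (n - 1)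

/-- The remoteness: the maximum average distance from a vertex to all others. -/
noncomputable def remoteness {n : ℕ} (G : SimpleGraph (Fin n)) : ℝ :=
  sSup {x : ℝ | ∃ v : Fin n, x = transmission G v} / (n - 1)

/-- The distance matrix of a graph. -/
noncomputable def distMatrix {n : ℕ} (G : SimpleGraph (Fin n)) : Matrix (Fin n) (Fin n) ℝ :=
  fun u v => (G.dist u v : ℝ)

/-- The largest distance eigenvalue ∂₁. -/
noncomputable def maxDistEig {n : ℕ} (G : SimpleGraph (Fin n)) : ℝ :=
  sSup (spectrum ℝ (distMatrix G))

/-- The smallest distance eigenvalue ∂ₙ. -/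
noncomputable def minDistEig {n : ℕ} (G : SimpleGraph (Fin n)) : ℝ :=
  sInf (spectrum ℝ (distMatrix G))
/-!
For `u ≠ v`, evaluating the positive semidefinite form of `D - ∂ₙ I` at `e_u - e_v` gives
`d(u, v) ≤ -∂ₙ`. Summing over `u`, every transmission is at most `(n - 1)(-∂ₙ)`, so `π ≤ -∂ₙ`.
If `-∂ₙ > 1`, an endpoint of an edge has a term `d = 1 < -∂ₙ` in its transmission, so the
inequality is strict; if `-∂ₙ ≤ 1`, all distances are `1` and `G` is complete. For `K_n`,
`D + I = J` is positive semidefinite, so `∂ₙ ≥ -1`, while `π ≥ 1` for every connected graph.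
-/

namespace Matrix

variable {n : Type*} [Fintype n] [DecidableEq n]

theorem PosSemidef.two_mul_apply_le_add {B : Matrix n n ℝ} (hB : B.PosSemidef) (u v : n) :
    2 * B u v ≤ B u u + B v v := by
  have hsymm : B u v = B v u := by simpa using congrFun (congrFun hB.isHermitian v) u
  have := hB.dotProduct_mulVec_nonneg (Pi.single u 1 - Pi.single v 1)
  simp only [star_trivial, mulVec_sub, mulVec_single, MulOpposite.op_one, one_smul,
    dotProduct_sub, sub_dotProduct, single_dotProduct, col_apply, one_mul, sub_nonneg,
    tsub_le_iff_right] at this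
  linarith

theorem IsHermitian.posSemidef_sub_smul_one_iff {A : Matrix n n ℝ} (hA : A.IsHermitian) (c : ℝ) :
    (A - c • 1).PosSemidef ↔ ∀ μ ∈ spectrum ℝ A, c ≤ μ := by
  rw [posSemidef_iff_isHermitian_and_spectrum_nonneg,
    and_iff_right (hA.sub (isHermitian_one.smul (IsSelfAdjoint.all c))),
    ← Algebra.algebraMap_eq_smul_one, ← spectrum.sub_singleton_eq, Set.sub_singleton]
  simp [Set.subset_def]

theorem IsHermitian.le_csInf_spectrum_iff [Nonempty n] {A : Matrix n n ℝ} (hA : A.IsHermitian)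
    (c : ℝ) : c ≤ sInf (spectrum ℝ A) ↔ (A - c • 1).PosSemidef := by
  rw [hA.posSemidef_sub_smul_one_iff, le_csInf_iff A.finite_real_spectrum.bddBelow
    ⟨_, hA.eigenvalues_mem_spectrum_real (Classical.arbitrary n)⟩]

end Matrix

theorem SimpleGraph.Connected.eq_top_of_dist_le_one {V : Type*} {G : SimpleGraph V}
    (hG : G.Connected) (h : ∀ u v, u ≠ v → G.dist u v ≤ 1) : G = ⊤ := by
  ext u v
  refine ⟨Adj.ne, fun huv => ?_⟩
  exact dist_eq_one_iff_adj.mp (le_antisymm (h u v huv) (hG.pos_dist_of_ne huv))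

section DistanceSpectrum

variable {n : ℕ} (G : SimpleGraph (Fin n))

theorem distMatrix_isHermitian : (distMatrix G).IsHermitian := by
  ext u v
  simp [distMatrix, dist_comm]

theorem dist_le_neg_minDistEig {u v : Fin n} (huv : u ≠ v) :
    (G.dist u v : ℝ) ≤ -minDistEig G := by
  have : Nonempty (Fin n) := ⟨u⟩
  have hpsd := ((distMatrix_isHermitian G).le_csInf_spectrum_iff _).mp le_rfl
  have := hpsd.two_mul_apply_le_add u v
  simp only [Matrix.sub_apply, distMatrix, Matrix.smul_apply, ne_eq, huv, not_false_eq_true,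
    Matrix.one_apply_ne, smul_eq_mul, mul_zero, sub_zero, SimpleGraph.dist_self,
    CharP.cast_eq_zero, Matrix.one_apply_eq, mul_one, zero_sub, le_add_neg_iff_add_le] at this
  rw [minDistEig]
  linarith

theorem neg_one_le_minDistEig_top [NeZero n] : -1 ≤ minDistEig (⊤ : SimpleGraph (Fin n)) := by
  rw [minDistEig, (distMatrix_isHermitian _).le_csInf_spectrum_iff]
  convert Matrix.posSemidef_vecMulVec_self_star (fun _ : Fin n => (1 : ℝ)) using 1
  ext u v
  by_cases huv : u = v <;> simp [distMatrix, dist_top, huv, Matrix.vecMulVec_apply]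

theorem sum_const_univ_erase (v : Fin n) (c : ℝ) : ∑ _u ∈ univ.erase v, c = (n - 1) * c := by
  simp [card_erase_of_mem, Nat.cast_pred v.pos]

theorem transmission_eq_sum_erase (v : Fin n) :
    transmission G v = ∑ u ∈ univ.erase v, G.dist v u :=
  (sum_erase _ (G.dist_self)).symm

theorem transmission_le (v : Fin n) : (transmission G v : ℝ) ≤ (n - 1) * -minDistEig G := by
  rw [transmission_eq_sum_erase, Nat.cast_sum, ← sum_const_univ_erase]
  exact sum_le_sum fun u hu => dist_le_neg_minDistEig G (ne_of_mem_erase hu).symm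

theorem transmission_lt {v w : Fin n} (hvw : v ≠ w) (h : (G.dist v w : ℝ) < -minDistEig G) :
    (transmission G v : ℝ) < (n - 1) * -minDistEig G := by
  rw [transmission_eq_sum_erase, Nat.cast_sum, ← sum_const_univ_erase]
  exact sum_lt_sum (fun u hu => dist_le_neg_minDistEig G (ne_of_mem_erase hu).symm)
    ⟨w, mem_erase.mpr ⟨hvw.symm, mem_univ w⟩, h⟩

theorem proximity_le_transmission_div (v : Fin n) :
    proximity G ≤ transmission G v / (n - 1) := by
  refine div_le_div_of_nonneg_right (csInf_le ⟨0, ?_⟩ ⟨v, rfl⟩) ?_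
  · rintro _ ⟨w, rfl⟩
    positivity
  · exact sub_nonneg.mpr (Nat.one_le_cast.mpr v.pos)

theorem one_le_proximity (hn : 2 ≤ n) (hG : G.Connected) : 1 ≤ proximity G := by
  have hn1 : (0 : ℝ) < n - 1 := by
    rw [sub_pos]
    exact_mod_cast hn
  rw [proximity, le_div_iff₀ hn1, one_mul]
  refine le_csInf ⟨_, hG.nonempty.some, rfl⟩ ?_
  rintro _ ⟨v, rfl⟩
  rw [transmission_eq_sum_erase, Nat.cast_sum, ← mul_one ((n : ℝ) - 1), ← sum_const_univ_erase]
  exact sum_le_sum fun u hu => Nat.one_le_cast.mpr (hG.pos_dist_of_ne (ne_of_mem_erase hu).symm)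

theorem proximity_le_neg_minDistEig (hn : 2 ≤ n) : proximity G ≤ -minDistEig G := by
  have hn1 : (0 : ℝ) < n - 1 := by
    rw [sub_pos]
    exact_mod_cast hn
  have : NeZero n := ⟨by omega⟩
  refine (proximity_le_transmission_div G 0).trans ((div_le_iff₀ hn1).mpr ?_)
  linarith [transmission_le G 0]

theorem proximity_lt_neg_minDistEig {v w : Fin n} (hvw : v ≠ w)
    (h : (G.dist v w : ℝ) < -minDistEig G) : proximity G < -minDistEig G := by
  have hn1 : (0 : ℝ) < n - 1 := by
    have : 1 < n := by simpa using Fintype.one_lt_card_iff.mpr ⟨v, w, hvw⟩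
    rw [sub_pos]
    exact_mod_cast this
  refine (proximity_le_transmission_div G v).trans_lt ((div_lt_iff₀ hn1).mpr ?_)
  linarith [transmission_lt G hvw h]

end DistanceSpectrum

theorem proximity_add_minDistEig {n : ℕ} (hn : 4 ≤ n) (G : SimpleGraph (Fin n))
    (hG : G.Connected) :
    proximity G + minDistEig G ≤ 0 ∧ (proximity G + minDistEig G = 0 ↔ G = ⊤) := by
  have hn2 : 2 ≤ n := by omega
  have : Nontrivial (Fin n) := Fin.nontrivial_iff_two_le.mpr hn2
  have hle : proximity G + minDistEig G ≤ 0 := by linarith [proximity_le_neg_minDistEig G hn2]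
  refine ⟨hle, fun heq => ?_, ?_⟩
  · obtain ⟨w, hvw⟩ := hG.preconnected.exists_adj_of_nontrivial (Classical.arbitrary (Fin n))
    have hm : -minDistEig G ≤ 1 := by
      by_contra! h
      have := proximity_lt_neg_minDistEig G hvw.ne (by rwa [dist_eq_one_iff_adj.mpr hvw, Nat.cast_one])
      linarith
    refine hG.eq_top_of_dist_le_one fun u v huv => ?_
    exact_mod_cast (dist_le_neg_minDistEig G huv).trans hm
  · rintro rfl
    have : NeZero n := ⟨by omega⟩
    linarith [one_le_proximity _ hn2 hG, neg_one_le_minDistEig_top (n := n)]
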